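/- With the same hypotheses as in the unfolding induction (equations [S,T^i]=0, ∂_sT^i=∂_{t_i}S, ∂_sU_{-1}=[U_0,S], ∂_{t_i}U_{-1}=[U_0,T^i], ∂_sU_{-2}=[U_{-1},S]−S holding modulo s^{m+1}), one has ∂_s(∂_{t_i}U_{-2} + T^i + [T^i,U_{-1}]) ≡ 0 modulo s^{m+1}. -/

import Mathlib

/-!
Propagation of the residue flatness equation in the `u`-direction in the unfolding
parameter `s`: with `t = (t₁,…,t_n)` and `s` the last of `n+1` formal variables, matrices
`T^i, S, U_k ∈ End_R(H)[[t,s]]` (`H` free over a commutative ℚ-algebra `R`), and the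
relations `[S,T^i] = 0`, `∂_s T^i = ∂_{t_i} S`, `∂_s U_{-1} = [U_0, S]`,
`∂_{t_i} U_{-1} = [U_0, T^i]`, `∂_s U_{-2} = [U_{-1}, S] − S` holding modulo `s^{m+1}`,
one has `∂_s(∂_{t_i} U_{-2} + T^i + [T^i, U_{-1}]) ≡ 0` modulo `s^{m+1}`.
Here `f ≡ g (mod s^{m+1})` means that all coefficients of `s`-degree `≤ m` agree.
-/

noncomputable section

open MvPowerSeries

/-- The formal partial derivative of a multivariate formal power series in the `i`-th
variable, defined coefficientwise. -/
def fpderiv {m : ℕ} {A : Type*} [Ring A] (i : Fin m) (f : MvPowerSeries (Fin m) A) :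
    MvPowerSeries (Fin m) A :=
  fun k => ((k i : ℕ) + 1) • f (k + Finsupp.single i 1)

/-- Congruence modulo `s^{m+1}`, where `s` is the last of the `n+1` variables:
all coefficients of `s`-degree `≤ m` agree. -/
def SMod {n : ℕ} {A : Type*} [Ring A] (m : ℕ)
    (f g : MvPowerSeries (Fin (n + 1)) A) : Prop :=
  ∀ k : Fin (n + 1) →₀ ℕ, k (Fin.last n) ≤ m → f k = g k

/-!
Reduce modulo `s^{m+1}`: congruence mod `s^{m+1}` is a ring congruence, and `∂_{t_i}` preserves
it because it does not lower the `s`-degree. Expanding `∂_s` of the flatness expression by the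
Leibniz rule and commuting `∂_s` past `∂_{t_i}`, the hypotheses turn it, in the quotient ring,
into `[[U_0, T^i], S] + [T^i, [U_0, S]]`, which by the Jacobi identity is `[U_0, [T^i, S]] = 0`.
-/

namespace MvPowerSeries

section EulerOperator

variable {σ A : Type*} [Semiring A]

/-- The Euler operator `x_i ∂_i`. -/
def eulerOp (i : σ) (f : MvPowerSeries σ A) : MvPowerSeries σ A :=
  fun k => k i • f k

theorem coeff_eulerOp (i : σ) (f : MvPowerSeries σ A) (k : σ →₀ ℕ) :
    coeff k (eulerOp i f) = k i • coeff k f :=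
  rfl

theorem eulerOp_mul [DecidableEq σ] (i : σ) (f g : MvPowerSeries σ A) :
    eulerOp i (f * g) = eulerOp i f * g + f * eulerOp i g := by
  ext k
  simp only [coeff_eulerOp, map_add, coeff_mul, Finset.smul_sum, ← Finset.sum_add_distrib]
  refine Finset.sum_congr rfl fun p hp => ?_
  rw [Finset.HasAntidiagonal.mem_antidiagonal] at hp
  rw [← hp, Finsupp.add_apply, add_smul, smul_mul_assoc, mul_smul_comm]

theorem X_mul_injective (i : σ) : Function.Injective (X i * · : MvPowerSeries σ A → _) := by
  intro f g h
  ext k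
  have hk := congr_arg (coeff (Finsupp.single i 1 + k)) h
  rwa [X, coeff_add_monomial_mul, coeff_add_monomial_mul, one_mul, one_mul] at hk

end EulerOperator

section PartialDerivative

variable {M : ℕ} {A : Type*} [Ring A]

theorem coeff_fpderiv (i : Fin M) (f : MvPowerSeries (Fin M) A) (k : Fin M →₀ ℕ) :
    coeff k (fpderiv i f) = (k i + 1) • coeff (k + Finsupp.single i 1) f :=
  rfl

theorem fpderiv_add (i : Fin M) (f g : MvPowerSeries (Fin M) A) :
    fpderiv i (f + g) = fpderiv i f + fpderiv i g := by
  ext k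
  simp only [coeff_fpderiv, map_add, smul_add]

theorem fpderiv_sub (i : Fin M) (f g : MvPowerSeries (Fin M) A) :
    fpderiv i (f - g) = fpderiv i f - fpderiv i g := by
  ext k
  simp only [coeff_fpderiv, map_sub, smul_sub]

theorem X_mul_fpderiv (i : Fin M) (f : MvPowerSeries (Fin M) A) :
    X i * fpderiv i f = eulerOp i f := by
  ext k
  rw [X, coeff_monomial_mul, one_mul, coeff_eulerOp]
  split_ifs with hk
  · have hki : (k - Finsupp.single i 1 : Fin M →₀ ℕ) i + 1 = k i := by
      rw [Finsupp.single_le_iff] at hk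
      simp only [Finsupp.tsub_apply, Finsupp.single_eq_same]
      omega
    rw [coeff_fpderiv, hki, tsub_add_cancel_of_le hk]
  · rw [Finsupp.single_le_iff, not_le, Nat.lt_one_iff] at hk
    rw [hk, zero_smul]

/- The coefficients need not commute, so `MvPowerSeries.pderiv` is not available. The Euler
operator is visibly a derivation, and `X i` is central and cancellable. -/
theorem fpderiv_mul (i : Fin M) (f g : MvPowerSeries (Fin M) A) :
    fpderiv i (f * g) = fpderiv i f * g + f * fpderiv i g := by
  refine X_mul_injective i ?_
  dsimp only
  rw [X_mul_fpderiv, eulerOp_mul, mul_add, ← mul_assoc, ← mul_assoc, X_mul_fpderiv, X_mul,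
    mul_assoc, X_mul_fpderiv]

theorem fpderiv_comm (i j : Fin M) (f : MvPowerSeries (Fin M) A) :
    fpderiv i (fpderiv j f) = fpderiv j (fpderiv i f) := by
  ext k
  simp only [coeff_fpderiv, smul_smul, add_right_comm k (Finsupp.single i 1)]
  congr 1
  rcases eq_or_ne i j with rfl | hij
  · rfl
  · simp only [Finsupp.add_apply, Finsupp.single_eq_of_ne hij, Finsupp.single_eq_of_ne hij.symm,
      add_zero, mul_comm]

end PartialDerivative

end MvPowerSeries

open MvPowerSeries

section Congruence

variable {n : ℕ} {A : Type*} [Ring A] {m : ℕ}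

theorem SMod.mul {f g f' g' : MvPowerSeries (Fin (n + 1)) A} (h : SMod m f g)
    (h' : SMod m f' g') : SMod m (f * f') (g * g') := by
  intro k hk
  change coeff k (f * f') = coeff k (g * g')
  classical
  rw [coeff_mul, coeff_mul]
  refine Finset.sum_congr rfl fun p hp => ?_
  have hdeg : p.1 (Fin.last n) + p.2 (Fin.last n) = k (Fin.last n) := by
    rw [← Finsupp.add_apply, Finset.HasAntidiagonal.mem_antidiagonal.1 hp]
  exact congr_arg₂ (· * ·) (h p.1 (by omega)) (h' p.2 (by omega))

variable (n A m) in
def SMod.ringCon : RingCon (MvPowerSeries (Fin (n + 1)) A) where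
  r := SMod m
  iseqv := ⟨fun _ _ _ => rfl, fun h k hk => (h k hk).symm,
    fun h h' k hk => (h k hk).trans (h' k hk)⟩
  add' h h' k hk := congr_arg₂ (· + ·) (h k hk) (h' k hk)
  mul' := SMod.mul

theorem SMod.fpderiv {f g : MvPowerSeries (Fin (n + 1)) A} (h : SMod m f g)
    {i : Fin (n + 1)} (hi : i ≠ Fin.last n) : SMod m (fpderiv i f) (fpderiv i g) := by
  intro k hk
  have hk' : (k + Finsupp.single i 1 : Fin (n + 1) →₀ ℕ) (Fin.last n) ≤ m := by
    simpa [Finsupp.single_apply, hi] using hk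
  simp only [_root_.fpderiv, h _ hk']

end Congruence

theorem stmt7_general {n : ℕ} {R : Type*} [CommRing R]
    {H : Type*} [AddCommGroup H] [Module R H]
    (m : ℕ)
    (T : Fin n → MvPowerSeries (Fin (n + 1)) (Module.End R H))
    (S : MvPowerSeries (Fin (n + 1)) (Module.End R H))
    (U : ℤ → MvPowerSeries (Fin (n + 1)) (Module.End R H))
    (hST : ∀ i, SMod m (S * T i - T i * S) 0)
    (hdsT : ∀ i, SMod m (fpderiv (Fin.last n) (T i)) (fpderiv i.castSucc S))
    (hdsU1 : SMod m (fpderiv (Fin.last n) (U (-1))) (U 0 * S - S * U 0))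
    (hdtU1 : ∀ i, SMod m (fpderiv i.castSucc (U (-1))) (U 0 * T i - T i * U 0))
    (hdsU2 : SMod m (fpderiv (Fin.last n) (U (-2))) ((U (-1) * S - S * U (-1)) - S)) :
    ∀ i, SMod m
      (fpderiv (Fin.last n)
        (fpderiv i.castSucc (U (-2)) + T i + (T i * U (-1) - U (-1) * T i))) 0 := by
  intro i
  let c := SMod.ringCon n (Module.End R H) m
  let π := c.mk'
  have hπ {f g} : SMod m f g ↔ π f = π g := c.eq.symm
  have hdtdsU2 := hdsU2.fpderiv (Fin.castSucc_lt_last i).ne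
  rw [fpderiv_comm, fpderiv_sub, fpderiv_sub, fpderiv_mul, fpderiv_mul] at hdtdsU2
  have hST' := hπ.1 (hST i)
  have hdsT' := hπ.1 (hdsT i)
  have hdsU1' := hπ.1 hdsU1
  have hdtU1' := hπ.1 (hdtU1 i)
  have hdtdsU2' := hπ.1 hdtdsU2
  simp only [map_add, map_sub, map_mul, map_zero] at hST' hdsT' hdsU1' hdtU1' hdtdsU2'
  rw [hπ, fpderiv_add, fpderiv_add, fpderiv_sub, fpderiv_mul, fpderiv_mul]
  simp only [map_add, map_sub, map_mul, map_zero]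
  rw [hdtdsU2', hdsT', hdsU1', hdtU1']
  -- Jacobi identity: `[[U₀, T], S] + [T, [U₀, S]] = [U₀, [T, S]]`
  calc _ = π (U 0) * (π (T i) * π S - π S * π (T i))
        - (π (T i) * π S - π S * π (T i)) * π (U 0) := by
        simp only [mul_sub, sub_mul, mul_assoc]; abel
    _ = 0 := by rw [← neg_sub (π S * π (T i)), hST', neg_zero, mul_zero, zero_mul, sub_zero]

theorem stmt7 {n : ℕ} {R : Type*} [CommRing R] [Algebra ℚ R]
    {H : Type*} [AddCommGroup H] [Module R H] [Module.Free R H]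
    (m : ℕ)
    (T : Fin n → MvPowerSeries (Fin (n + 1)) (Module.End R H))
    (S : MvPowerSeries (Fin (n + 1)) (Module.End R H))
    (U : ℤ → MvPowerSeries (Fin (n + 1)) (Module.End R H))
    (hST : ∀ i, SMod m (S * T i - T i * S) 0)
    (hdsT : ∀ i, SMod m (fpderiv (Fin.last n) (T i)) (fpderiv i.castSucc S))
    (hdsU1 : SMod m (fpderiv (Fin.last n) (U (-1))) (U 0 * S - S * U 0))
    (hdtU1 : ∀ i, SMod m (fpderiv i.castSucc (U (-1))) (U 0 * T i - T i * U 0))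
    (hdsU2 : SMod m (fpderiv (Fin.last n) (U (-2))) ((U (-1) * S - S * U (-1)) - S)) :
    ∀ i, SMod m
      (fpderiv (Fin.last n)
        (fpderiv i.castSucc (U (-2)) + T i + (T i * U (-1) - U (-1) * T i))) 0 :=
  stmt7_general m T S U hST hdsT hdsU1 hdtU1 hdsU2
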